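/- Let s ∈ ℂ with Im s < 0 and let λ ∈ ℝ. Then the integral ∫_{ℝ} (e^{t} + e^{−t})^{−is} e^{−iλt} dt converges absolutely and π^{−is} Γ(is) · 2 ∫_{ℝ} (e^{t} + e^{−t})^{−is} e^{−iλt} dt = π^{−(is−iλ)/2} Γ( (is − iλ)/2 ) · π^{−(is+iλ)/2} Γ( (is + iλ)/2 ), where (e^{t}+e^{−t})^{−is} = exp(−is·log(e^{t}+e^{−t})) and Γ is the complex Gamma function. -/

import Mathlib

/-!
With `p, q = (is ∓ iλ)/2` the integrand is `(e^t + e^{-t})^{-(p+q)} e^{(p-q)t}`, which is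
`σ(2t)^p σ(-2t)^q` for the logistic function `σ(x) = 1/(1 + e^{-x})`. Since `σ' = σ (1 - σ)`
and `σ(-x) = 1 - σ(x)`, the substitution `u = σ(x)` maps `∫_ℝ σ(x)^p σ(-x)^q dx` onto the Beta
integral `B(p, q)`, so twice the integral is `B(p, q)`. The identity is then
`Γ(p) Γ(q) = Γ(p + q) B(p, q)` together with `π^{-p} π^{-q} = π^{-(p+q)}`, as `p + q = is`.
-/

open MeasureTheory

lemma Complex.ofReal_exp_cpow (r : ℝ) (w : ℂ) : (Real.exp r : ℂ) ^ w = Complex.exp (r * w) := by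
  rw [Complex.cpow_def_of_ne_zero (by exact_mod_cast (Real.exp_pos r).ne'),
    ← Complex.ofReal_log (Real.exp_pos r).le, Real.log_exp]

namespace Real

lemma abs_deriv_sigmoid_smul_betaIntegrand (p q : ℂ) (x : ℝ) :
    |sigmoid x * (1 - sigmoid x)| •
        ((sigmoid x : ℂ) ^ (p - 1) * (1 - (sigmoid x : ℂ)) ^ (q - 1)) =
      (sigmoid x : ℂ) ^ p * (sigmoid (-x) : ℂ) ^ q := by
  have h0 : (sigmoid x : ℂ) ≠ 0 := by exact_mod_cast (sigmoid_pos x).ne'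
  have h1 : (sigmoid (-x) : ℂ) ≠ 0 := by exact_mod_cast (sigmoid_pos (-x)).ne'
  have hsub : (1 : ℂ) - sigmoid x = sigmoid (-x) := by rw [sigmoid_neg]; push_cast; ring
  rw [← sigmoid_neg, abs_of_pos (mul_pos (sigmoid_pos x) (sigmoid_pos (-x))), Complex.real_smul,
    hsub, Complex.cpow_sub _ _ h0, Complex.cpow_sub _ _ h1, Complex.cpow_one, Complex.cpow_one]
  push_cast
  field_simp

theorem integrable_sigmoid_cpow_mul_sigmoid_neg_cpow {p q : ℂ} (hp : 0 < p.re) (hq : 0 < q.re) :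
    Integrable (fun x : ℝ => (sigmoid x : ℂ) ^ p * (sigmoid (-x) : ℂ) ^ q) := by
  have h := (Complex.betaIntegral_convergent hp hq).1.mono_set Set.Ioo_subset_Ioc_self
  rw [← range_sigmoid, ← Set.image_univ, integrableOn_image_iff_integrableOn_abs_deriv_smul
      MeasurableSet.univ (fun x _ => (hasDerivAt_sigmoid x).hasDerivWithinAt)
      sigmoid_injective.injOn, integrableOn_univ] at h
  simpa only [abs_deriv_sigmoid_smul_betaIntegrand] using h

lemma sigmoid_two_mul (t : ℝ) :
    sigmoid (2 * t) = exp (t - log (exp t + exp (-t))) := by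
  rw [exp_sub, exp_log (by positivity), sigmoid_def]
  field_simp
  rw [add_mul, one_mul, ← exp_add]
  ring_nf

lemma sigmoid_two_mul_cpow_mul_sigmoid_neg_cpow (p q : ℂ) (t : ℝ) :
    (sigmoid (2 * t) : ℂ) ^ p * (sigmoid (-(2 * t)) : ℂ) ^ q =
      Complex.exp (-(p + q) * (log (exp t + exp (-t)) : ℂ)) * Complex.exp ((p - q) * t) := by
  rw [← mul_neg, sigmoid_two_mul, sigmoid_two_mul, neg_neg, add_comm (exp (-t)),
    Complex.ofReal_exp_cpow, Complex.ofReal_exp_cpow, ← Complex.exp_add, ← Complex.exp_add]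
  push_cast
  ring_nf

end Real

namespace Complex

open Real in
theorem betaIntegral_eq_integral_sigmoid (p q : ℂ) :
    betaIntegral p q = ∫ x : ℝ, (sigmoid x : ℂ) ^ p * (sigmoid (-x) : ℂ) ^ q := by
  rw [betaIntegral, intervalIntegral.integral_of_le zero_le_one, integral_Ioc_eq_integral_Ioo,
    ← range_sigmoid, ← Set.image_univ, integral_image_eq_integral_abs_deriv_smul
      MeasurableSet.univ (fun x _ => (hasDerivAt_sigmoid x).hasDerivWithinAt)
      sigmoid_injective.injOn, Measure.restrict_univ]
  simp_rw [abs_deriv_sigmoid_smul_betaIntegrand]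

theorem integrable_two_cosh_cpow_mul_exp {p q : ℂ} (hp : 0 < p.re) (hq : 0 < q.re) :
    Integrable (fun t : ℝ =>
      exp (-(p + q) * (Real.log (Real.exp t + Real.exp (-t)) : ℂ)) * exp ((p - q) * t)) := by
  simp_rw [← Real.sigmoid_two_mul_cpow_mul_sigmoid_neg_cpow]
  exact (Real.integrable_sigmoid_cpow_mul_sigmoid_neg_cpow hp hq).comp_mul_left' two_ne_zero

theorem two_mul_integral_two_cosh_cpow_mul_exp (p q : ℂ) :
    2 * ∫ t : ℝ, exp (-(p + q) * (Real.log (Real.exp t + Real.exp (-t)) : ℂ)) *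
        exp ((p - q) * t) = betaIntegral p q := by
  simp_rw [← Real.sigmoid_two_mul_cpow_mul_sigmoid_neg_cpow]
  rw [Measure.integral_comp_mul_left
      (fun x => (Real.sigmoid x : ℂ) ^ p * (Real.sigmoid (-x) : ℂ) ^ q),
    betaIntegral_eq_integral_sigmoid]
  norm_num [abs_of_pos, real_smul, ← mul_assoc]

end Complex

theorem SO2_baxter_L_factor (s : ℂ) (hs : s.im < 0) (lam : ℝ) :
    Integrable (fun t : ℝ =>
      Complex.exp (-(Complex.I * s) * (Real.log (Real.exp t + Real.exp (-t)) : ℂ)) *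
        Complex.exp (-Complex.I * lam * t)) ∧
    (Real.pi : ℂ) ^ (-(Complex.I * s)) * Complex.Gamma (Complex.I * s) *
      (2 * ∫ t : ℝ,
        Complex.exp (-(Complex.I * s) * (Real.log (Real.exp t + Real.exp (-t)) : ℂ)) *
          Complex.exp (-Complex.I * lam * t))
    = (Real.pi : ℂ) ^ (-(Complex.I * s - Complex.I * lam)/2) *
        Complex.Gamma ((Complex.I * s - Complex.I * lam)/2) *
      ((Real.pi : ℂ) ^ (-(Complex.I * s + Complex.I * lam)/2) *
        Complex.Gamma ((Complex.I * s + Complex.I * lam)/2)) := by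
  set p := (Complex.I * s - Complex.I * lam) / 2
  set q := (Complex.I * s + Complex.I * lam) / 2
  have hp : 0 < p.re := by simpa [p] using hs
  have hq : 0 < q.re := by simpa [q] using hs
  have hnp : -(Complex.I * s - Complex.I * lam) / 2 = -p := by ring
  have hnq : -(Complex.I * s + Complex.I * lam) / 2 = -q := by ring
  have hsum : Complex.I * s = p + q := by ring
  have hdiff : -Complex.I * lam = p - q := by ring
  have hπ : (Real.pi : ℂ) ^ (-(p + q)) = (Real.pi : ℂ) ^ (-p) * (Real.pi : ℂ) ^ (-q) := by
    rw [neg_add, Complex.cpow_add _ _ (by exact_mod_cast Real.pi_ne_zero)]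
  rw [hnp, hnq, hsum, hdiff]
  refine ⟨Complex.integrable_two_cosh_cpow_mul_exp hp hq, ?_⟩
  rw [Complex.two_mul_integral_two_cosh_cpow_mul_exp, hπ, mul_assoc _ (Complex.Gamma _),
    ← Complex.Gamma_mul_Gamma_eq_betaIntegral hp hq]
  ring
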